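/- arXiv:1303.4800 — 4 statements merged into one kernel-verified Lean document; each statement's English description precedes it below -/
import Mathlib

section
/- Let G be a finite group, V a finite-dimensional complex vector space, and let π¹ and π² be two representations of G on V such that π¹_h ∘ π²_g = π²_g ∘ π¹_h for all g, h ∈ G. Let T be an involutive linear automorphism of V intertwining π¹ and π², i.e., T ∘ π¹_g = π²_g ∘ T for all g. Then the function g ↦ Tr(π¹_g ∘ T) is a class function on G. -/
/-- For a finite group `G`, two commuting isomorphic representations
`π¹ π²` of `G` on a finite-dimensional complex vector space `V`, and an involutive
linear automorphism `T` of `V` intertwining them, the function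
`g ↦ Tr(π¹ g ∘ T)` is a class function on `G`. -/
theorem gelfand_stmt0 {G V : Type*} [Group G] [Finite G]
    [AddCommGroup V] [Module ℂ V] [FiniteDimensional ℂ V]
    (π₁ π₂ : Representation ℂ G V)
    (hcomm : ∀ g h : G, π₁ h ∘ₗ π₂ g = π₂ g ∘ₗ π₁ h)
    (T : V →ₗ[ℂ] V) (hTinv : T ∘ₗ T = LinearMap.id)
    (hint : ∀ g : G, T ∘ₗ π₁ g = π₂ g ∘ₗ T) :
    ∀ g h : G,
      LinearMap.trace ℂ V (π₁ (g⁻¹ * h * g) ∘ₗ T) =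
        LinearMap.trace ℂ V (π₁ h ∘ₗ T) := by
  intro g h
  have hTT : T * T = 1 := hTinv
  have hintm : ∀ x : G, T * π₁ x = π₂ x * T := hint
  have hcommm : ∀ x y : G, π₁ y * π₂ x = π₂ x * π₁ y := fun x y => hcomm x y
  have hC : π₁ g * T = T * π₂ g := by
    calc π₁ g * T = (T * T) * π₁ g * T := by rw [hTT, one_mul]
      _ = T * (T * π₁ g) * T := by noncomm_ring
      _ = T * (π₂ g * T) * T := by rw [hintm g]
      _ = T * π₂ g * (T * T) := by noncomm_ring
      _ = T * π₂ g := by rw [hTT, mul_one]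
  have hP : π₂ g * T = T * π₁ g := (hintm g).symm
  have key : π₁ (g⁻¹ * h * g) ∘ₗ T = (π₁ g⁻¹ * π₁ h * T) * π₂ g := by
    calc π₁ (g⁻¹ * h * g) ∘ₗ T = π₁ g⁻¹ * π₁ h * (π₁ g * T) := by
          simp [map_mul, Module.End.mul_eq_comp, LinearMap.comp_assoc]
      _ = π₁ g⁻¹ * π₁ h * (T * π₂ g) := by rw [hC]
      _ = (π₁ g⁻¹ * π₁ h * T) * π₂ g := by noncomm_ring
  rw [key, LinearMap.trace_mul_comm]
  have step : π₂ g * (π₁ g⁻¹ * π₁ h * T) = (π₁ g⁻¹ * π₁ h * T) * π₁ g := by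
    calc π₂ g * (π₁ g⁻¹ * π₁ h * T)
        = (π₂ g * π₁ g⁻¹) * π₁ h * T := by noncomm_ring
      _ = (π₁ g⁻¹ * π₂ g) * π₁ h * T := by rw [← hcommm g g⁻¹]
      _ = π₁ g⁻¹ * (π₁ h * π₂ g) * T := by rw [hcommm g h]; noncomm_ring
      _ = π₁ g⁻¹ * π₁ h * (π₂ g * T) := by noncomm_ring
      _ = π₁ g⁻¹ * π₁ h * (T * π₁ g) := by rw [hP]
      _ = (π₁ g⁻¹ * π₁ h * T) * π₁ g := by noncomm_ring
  rw [step, LinearMap.trace_mul_comm]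
  have final : π₁ g * (π₁ g⁻¹ * π₁ h * T) = π₁ h ∘ₗ T := by
    calc π₁ g * (π₁ g⁻¹ * π₁ h * T) = (π₁ g * π₁ g⁻¹) * (π₁ h * T) := by noncomm_ring
      _ = π₁ h * T := by rw [← map_mul, mul_inv_cancel, map_one, one_mul]
      _ = π₁ h ∘ₗ T := rfl
  rw [final]
end

section
/- Let G be a finite group with irreducible complex representations π^k (1 ≤ k ≤ r) with matrix coefficients e^k_{ij} forming an orthonormal basis of L²(G). Let T be the linear map on L²(G) defined by T(e^k_{ij}) = e^k_{ji}. Then T is an involutive automorphism of L²(G) and for every g ∈ G, Tr(ρ_g ∘ T) = Σ_{k=1}^r χ_k(g), the Gelfand character of G, where ρ denotes the right regular representation of G on L²(G). -/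
/-!
`T` permutes the basis `e^k_{ij}` by the involution `(i, j) ↦ (j, i)`, so `T ∘ T = id`.
Since `ρ_g e^k_{ji} = ∑_l π^k(g)_{li} e^k_{jl}`, the `e^k_{ij}`-coefficient of `ρ_g (T e^k_{ij})`
is `π^k(g)_{ii}` when `i = j` and `0` otherwise; summing these diagonal coefficients of the
matrix of `ρ_g ∘ T` gives `∑_k tr π^k(g)`.
-/

/-- The right regular representation `(ρ g f) h = f (h * g)` on `L²(G) = G → ℂ`. -/
def rregRep {G : Type*} [Group G] (g : G) : (G → ℂ) →ₗ[ℂ] (G → ℂ) where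
  toFun f := fun h => f (h * g)
  map_add' _ _ := rfl
  map_smul' _ _ := rfl

open Module

theorem LinearMap.trace_eq_sum_repr {R M ι : Type*} [CommSemiring R] [AddCommMonoid M]
    [Module R M] [Fintype ι] [DecidableEq ι] (b : Basis ι R M) (f : M →ₗ[R] M) :
    LinearMap.trace R M f = ∑ i, b.repr (f (b i)) i := by
  simp only [LinearMap.trace_eq_matrix_trace R b, Matrix.trace, Matrix.diag,
    LinearMap.toMatrix_apply]

theorem Module.Basis.comp_self_eq_id_of_involutive {R M ι : Type*} [Semiring R]
    [AddCommMonoid M] [Module R M] (b : Basis ι R M) {σ : ι → ι} (hσ : Function.Involutive σ)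
    (T : M →ₗ[R] M) (hT : ∀ i, T (b i) = b (σ i)) : T ∘ₗ T = LinearMap.id :=
  b.ext fun i => by simp [hT, hσ i]

theorem rregRep_matrix_entry {G m : Type*} [Group G] [Fintype m] [DecidableEq m]
    (ρ : G →* Matrix m m ℂ) (g : G) (i j : m) :
    rregRep g (fun h => ρ h i j) = ∑ l, ρ g l j • fun h => ρ h i l := by
  funext h
  simp [rregRep, map_mul, Matrix.mul_apply, mul_comm]

theorem Module.Basis.repr_sum_smul_row_apply {R ι : Type*} {κ : ι → Type*} [Semiring R]
    {M : Type*} [AddCommMonoid M] [Module R M] [∀ k, Fintype (κ k)] [∀ k, DecidableEq (κ k)]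
    (b : Basis (Σ k, κ k × κ k) R M) (k : ι) (c : κ k → R) (i j : κ k) :
    b.repr (∑ l, c l • b ⟨k, (j, l)⟩) ⟨k, (i, j)⟩ = if i = j then c i else 0 := by
  simp only [map_sum, map_smul, Basis.repr_self, Finsupp.coe_finsetSum, Finset.sum_apply,
    Finsupp.smul_apply, Finsupp.single_apply_left sigma_mk_injective, Finsupp.single_apply,
    Prod.mk.injEq, smul_eq_mul, mul_ite, mul_one, mul_zero]
  by_cases h : i = j
  · simp [h]
  · simp [h, Ne.symm h]

theorem gelfand_stmt1_general {G : Type*} [Group G] {r : ℕ} (n : Fin r → ℕ)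
    (π : ∀ k : Fin r, G →* Matrix.unitaryGroup (Fin (n k)) ℂ)
    (b : Module.Basis (Σ k : Fin r, Fin (n k) × Fin (n k)) ℂ (G → ℂ))
    (hb : ∀ p : Σ k : Fin r, Fin (n k) × Fin (n k),
      (b p : G → ℂ) =
        fun g => (π p.1 g : Matrix (Fin (n p.1)) (Fin (n p.1)) ℂ) p.2.1 p.2.2)
    (T : (G → ℂ) →ₗ[ℂ] (G → ℂ))
    (hT : ∀ (k : Fin r) (i j : Fin (n k)),
      T (fun g => (π k g : Matrix (Fin (n k)) (Fin (n k)) ℂ) i j) =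
        fun g => (π k g : Matrix (Fin (n k)) (Fin (n k)) ℂ) j i) :
    T ∘ₗ T = LinearMap.id ∧
    ∀ g : G, LinearMap.trace ℂ (G → ℂ) (rregRep g ∘ₗ T) =
      ∑ k : Fin r, Matrix.trace (π k g : Matrix (Fin (n k)) (Fin (n k)) ℂ) := by
  have hTb : ∀ p, T (b p) = b ⟨p.1, p.2.swap⟩ := by
    rintro ⟨k, i, j⟩
    rw [hb, hb]
    exact hT k i j
  refine ⟨b.comp_self_eq_id_of_involutive (fun _ => rfl) T hTb, fun g => ?_⟩
  have hρT : ∀ k (i j : Fin (n k)), (rregRep g ∘ₗ T) (b ⟨k, (i, j)⟩) =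
      ∑ l, (π k g : Matrix (Fin (n k)) (Fin (n k)) ℂ) l i • b ⟨k, (j, l)⟩ := by
    intro k i j
    rw [LinearMap.comp_apply, hTb]
    simp only [hb]
    exact rregRep_matrix_entry ((Matrix.unitaryGroup _ ℂ).subtype.comp (π k)) g j i
  rw [LinearMap.trace_eq_sum_repr b, ← Finset.univ_sigma_univ, Finset.sum_sigma]
  simp only [Fintype.sum_prod_type, hρT, Basis.repr_sum_smul_row_apply, Finset.sum_ite_eq,
    Finset.mem_univ, if_true, Matrix.trace, Matrix.diag]

/-- let `G` be a finite group whose irreducible (unitary) representations are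
`π k` (`k = 1, …, r`), with matrix coefficients `e^k_{ij} = (π k ·) i j` forming a basis of
`L²(G)`.  If `T` is the linear map of `L²(G)` with `T (e^k_{ij}) = e^k_{ji}`, then `T` is an
involution and `Tr (ρ_g ∘ T) = Σ_k χ_k(g)` is the Gelfand character of `G`. -/
theorem gelfand_stmt1 {G : Type*} [Group G] [Fintype G] {r : ℕ} (n : Fin r → ℕ)
    (π : ∀ k : Fin r, G →* Matrix.unitaryGroup (Fin (n k)) ℂ)
    (b : Module.Basis (Σ k : Fin r, Fin (n k) × Fin (n k)) ℂ (G → ℂ))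
    (hb : ∀ p : Σ k : Fin r, Fin (n k) × Fin (n k),
      (b p : G → ℂ) =
        fun g => (π p.1 g : Matrix (Fin (n p.1)) (Fin (n p.1)) ℂ) p.2.1 p.2.2)
    (T : (G → ℂ) →ₗ[ℂ] (G → ℂ))
    (hT : ∀ (k : Fin r) (i j : Fin (n k)),
      T (fun g => (π k g : Matrix (Fin (n k)) (Fin (n k)) ℂ) i j) =
        fun g => (π k g : Matrix (Fin (n k)) (Fin (n k)) ℂ) j i) :
    T ∘ₗ T = LinearMap.id ∧
    ∀ g : G, LinearMap.trace ℂ (G → ℂ) (rregRep g ∘ₗ T) =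
      ∑ k : Fin r, Matrix.trace (π k g : Matrix (Fin (n k)) (Fin (n k)) ℂ) :=
  gelfand_stmt1_general n π b hb T hT
end

section
/- Let G be a finite group, L an involutive anti-automorphism of G, and L* the automorphism of L²(G) defined by L*(f) = f ∘ L. Then for every g ∈ G, the trace of ρ_g ∘ L* on L²(G) equals the number of elements h ∈ G with h⁻¹ L(h) = g, where ρ is the right regular representation. -/
/-- The linear automorphism `L⋆ f = f ∘ L` of `L²(G)` induced by a map `L : G → G`. -/
def Lstar {G : Type*} (L : G → G) : (G → ℂ) →ₗ[ℂ] (G → ℂ) where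
  toFun f := f ∘ L
  map_add' _ _ := rfl
  map_smul' _ _ := rfl

/-- for an involutive anti-automorphism `L` of a finite group `G`,
`Tr(ρ_g ∘ L⋆) = |{h ∈ G : h⁻¹ L(h) = g}|`. -/
theorem gelfand_stmt3 {G : Type*} [Group G] [Fintype G] [DecidableEq G] (L : G → G)
    (hanti : ∀ g h : G, L (g * h) = L h * L g) (hinv : ∀ g : G, L (L g) = g) :
    ∀ g : G, LinearMap.trace ℂ (G → ℂ) (rregRep g ∘ₗ Lstar L) =
      (Fintype.card {h : G // h⁻¹ * L h = g} : ℂ) := by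
  intro g
  rw [LinearMap.trace_eq_matrix_trace ℂ (Pi.basisFun ℂ G)]
  rw [Matrix.trace]
  have hdiag : ∀ i : G, (LinearMap.toMatrix (Pi.basisFun ℂ G) (Pi.basisFun ℂ G)
      (rregRep g ∘ₗ Lstar L)).diag i = if i⁻¹ * L i = g then 1 else 0 := by
    intro i
    rw [Matrix.diag_apply, LinearMap.toMatrix_apply]
    simp only [Pi.basisFun_apply, Pi.basisFun_repr, LinearMap.comp_apply]
    have hrfl : (rregRep g) ((Lstar L) (Pi.single i (1:ℂ))) i
        = (Pi.single i (1:ℂ) : G → ℂ) (L (i * g)) := rfl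
    rw [hrfl, Pi.single_apply]
    congr 1
    simp only [eq_iff_iff]
    constructor
    · intro h
      have : L (L (i * g)) = L i := by rw [h]
      rw [hinv] at this
      rw [← this]; group
    · intro h
      have : i * g = L i := by
        rw [← h]; group
      rw [this, hinv]
  simp_rw [hdiag]
  simp [Finset.sum_boole, Fintype.card_subtype]
end

section
/- Let G be a finite group and L an involutive anti-automorphism of G such that χ(L(g)) = χ(g) for every irreducible complex character χ and every g ∈ G. Then the class function g ↦ |{h ∈ G : h⁻¹L(h) = g}| equals Σ_k ε_k χ_k(g) where each coefficient ε_k is ±1. -/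
/-!
Write `σ g = (L g)⁻¹`; this is an involutive automorphism, and the hypothesis says
`χ ∘ σ = χ ∘ inv` for every irreducible `χ`, i.e. `V ∘ σ ≅ V*`.  For irreducible `V`, the
representation `g ↦ V(σ g) ⊗ V(g)` on `V ⊗ V` therefore has a one-dimensional space of invariants;
the flip of the two factors preserves it, so acts on it by `±1`, and computing the trace of
(flip ∘ averaging) shows that this sign is the twisted indicator `|G|⁻¹ ∑ χ(σ h * h)`.
The counting function `N g = #{h | h⁻¹ L h = g}` is a class function whose inner product with `χ`
is the same twisted indicator, and class functions are determined by these inner products.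
-/

open CategoryTheory LinearMap
open scoped MonoidAlgebra

theorem LinearMap.trace_map_comp_comm {R M : Type*} [CommRing R] [AddCommGroup M] [Module R M]
    [Module.Free R M] [Module.Finite R M] (f g : M →ₗ[R] M) :
    trace R (TensorProduct R M M)
        (TensorProduct.map f g ∘ₗ (TensorProduct.comm R M M).toLinearMap) =
      trace R M (f ∘ₗ g) := by
  let b := Module.Free.chooseBasis R M
  rw [trace_eq_matrix_trace R (b.tensorProduct b), trace_eq_matrix_trace R b,
    toMatrix_comp b b b, Matrix.trace, Matrix.trace, Fintype.sum_prod_type]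
  simp [Matrix.mul_apply, toMatrix_apply, Module.Basis.tensorProduct_apply, mul_comm]

/-- `Q (1 ± s) / 2` are idempotents with traces in `ℕ` adding up to `trace Q = 1`. -/
theorem LinearMap.trace_mul_eq_one_or_neg_one {K V : Type*} [Field K] [CharZero K]
    [AddCommGroup V] [Module K V] [FiniteDimensional K V] {Q s : Module.End K V}
    (hQ : IsIdempotentElem Q) (htr : trace K V Q = 1) (hs : s * s = 1) (hQs : Commute Q s) :
    trace K V (Q * s) = 1 ∨ trace K V (Q * s) = -1 := by
  have hQQs : Q * (Q * s) = Q * s := by rw [← mul_assoc, hQ.eq]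
  have hQsQ : Q * s * Q = Q * s := by rw [mul_assoc, ← hQs.eq, ← mul_assoc, hQ.eq]
  have hQsQs : Q * s * (Q * s) = Q := by rw [← mul_assoc, hQsQ, mul_assoc, hs, mul_one]
  have idem : ∀ t : K, t * t = 1 → IsIdempotentElem ((2 : K)⁻¹ • (Q + t • (Q * s))) := by
    intro t ht
    unfold IsIdempotentElem
    simp only [add_mul, mul_add, smul_mul_assoc, mul_smul_comm, hQ.eq, hQQs, hQsQ, hQsQs]
    linear_combination (norm := module) ht • ((4 : K)⁻¹ • Q)
  obtain ⟨m, hm⟩ : ∃ m : ℕ, trace K V ((2 : K)⁻¹ • (Q + (1 : K) • (Q * s))) = m :=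
    ⟨_, (idem 1 (one_mul 1)).isProj_range.trace⟩
  obtain ⟨n, hn⟩ : ∃ n : ℕ, trace K V ((2 : K)⁻¹ • (Q + (-1 : K) • (Q * s))) = n :=
    ⟨_, (idem (-1) (by norm_num)).isProj_range.trace⟩
  simp only [map_smul, map_add, htr, smul_eq_mul] at hm hn
  have hmn : m + n = 1 := by exact_mod_cast (by linear_combination -hm - hn : (m + n : K) = 1)
  rcases (by omega : (m = 1 ∧ n = 0) ∨ (m = 0 ∧ n = 1)) with ⟨rfl, rfl⟩ | ⟨rfl, rfl⟩
  · left; push_cast at hm hn; linear_combination hm - hn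
  · right; push_cast at hm hn; linear_combination hm - hn

theorem IsSemisimpleModule.smul_eq_zero_of_forall_isSimpleModule {R M : Type*} [Ring R]
    [AddCommGroup M] [Module R M] [IsSemisimpleModule R M] {r : R}
    (h : ∀ N : Submodule R M, IsSimpleModule R N → ∀ n ∈ N, r • n = 0) (m : M) : r • m = 0 := by
  have hm : m ∈ ⨆ N : {N : Submodule R M | IsSimpleModule R N}, (N : Submodule R M) := by
    rw [← sSup_eq_iSup', sSup_simples_eq_top]; trivial
  refine Submodule.iSup_induction _ (motive := fun m => r • m = 0) hm
    (fun N n hn => h N N.2 n hn) (smul_zero r) fun x y hx hy => ?_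
  rw [smul_add, hx, hy, add_zero]

theorem Fintype.sum_card_fiber_mul {α β R : Type*} [Fintype α] [Fintype β] [DecidableEq β]
    [CommSemiring R] (φ : α → β) (F : β → R) :
    ∑ b, (Fintype.card {a // φ a = b} : R) * F b = ∑ a, F (φ a) := by
  rw [← Fintype.sum_fiberwise φ]
  refine Fintype.sum_congr _ _ fun b => ?_
  rw [Finset.sum_congr rfl fun a _ => congrArg F a.2, Finset.sum_const, Finset.card_univ,
    nsmul_eq_mul]

def IsClassFunction {G α : Type*} [Group G] (f : G → α) : Prop :=
  ∀ g h : G, f (h * g * h⁻¹) = f g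

namespace Representation

variable {k G : Type*} [Field k] [Group G]

theorem averageMap_eq_smul_sum [Fintype G] {V : Type*} [AddCommGroup V] [Module k V]
    (ρ : Representation k G V) [Invertible (Fintype.card G : k)] :
    ρ.averageMap = ⅟(Fintype.card G : k) • ∑ g, ρ g := by
  simp [averageMap, GroupAlgebra.average, map_sum]

/-- Schur's lemma: the operator is a scalar, and its trace is the vanishing inner product. -/
theorem sum_smul_inv_eq_zero_of_isIrreducible [Fintype G] [IsAlgClosed k] [CharZero k]
    {V : Type*} [AddCommGroup V] [Module k V] [FiniteDimensional k V]
    (ρ : Representation k G V) [ρ.IsIrreducible] {f : G → k} (hf : IsClassFunction f)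
    (horth : ∑ g, f g * ρ.character g⁻¹ = 0) : ∑ g, f g • ρ g⁻¹ = 0 := by
  set T := ∑ g, f g • ρ g⁻¹ with hT
  have hcomm : ∀ h, T * ρ h = ρ h * T := fun h => by
    simp only [hT, Finset.sum_mul, Finset.mul_sum, smul_mul_assoc, mul_smul_comm, ← map_mul]
    exact Fintype.sum_equiv (MulAut.conj h⁻¹).toEquiv _ _ fun g => by
      simpa [mul_assoc] using congrArg (· • (ρ g⁻¹ * ρ h)) (hf g h⁻¹).symm
  obtain ⟨c, hc⟩ := IsIrreducible.algebraMap_intertwiningMap_bijective_of_isAlgClosed.2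
    (⟨T, hcomm⟩ : IntertwiningMap ρ ρ)
  have hTc : T = c • LinearMap.id := congrArg IntertwiningMap.toLinearMap hc.symm
  have : Nontrivial V := IsSimpleModule.nontrivial k[G] ρ.asModule
  have htr : c * Module.finrank k V = 0 := by
    rw [← horth, ← smul_eq_mul, ← trace_id, ← map_smul, ← hTc, hT, map_sum]
    simp [character]
  rw [hTc, (mul_eq_zero.1 htr).resolve_right (by simp [Module.finrank_pos.ne']), zero_smul]

variable (M : Type*) [AddCommGroup M] [Module k M] [Module k[G] M] [IsScalarTower k k[G] M]

theorem asAlgebraHom_ofModule' (r : k[G]) :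
    (ofModule' (G := G) M).asAlgebraHom r = Algebra.lsmul k k M r :=
  DFunLike.congr_fun ((MonoidAlgebra.lift k _ G).apply_symm_apply _) r

theorem isIrreducible_ofModule' [IsSimpleModule k[G] M] :
    (ofModule' (k := k) (G := G) M).IsIrreducible := by
  rw [irreducible_iff_isSimpleModule_asModule]
  let e : M ≃ₗ[k[G]] (ofModule' (k := k) (G := G) M).asModule :=
    { AddEquiv.refl M with
      map_smul' := fun r m => (congrArg (· m) (asAlgebraHom_ofModule' M r)).symm }
  exact IsSimpleModule.congr e.symm

end Representation

namespace FDRep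

section Simple

variable {k : Type u} [Field k] [IsAlgClosed k] [CharZero k] {G : Type u} [Group G] [Fintype G]

theorem simple_of_isIrreducible {V : Type u} [AddCommGroup V] [Module k V] [FiniteDimensional k V]
    (ρ : Representation k G V) [ρ.IsIrreducible] :
    Simple (FDRep.of ρ) := by
  have : Invertible (Nat.card G : k) := invertibleOfNonzero (NeZero.ne _)
  rw [simple_iff_char_is_norm_one]
  have h := Representation.char_orthonormal ρ ρ
  rw [if_pos ⟨Representation.Equiv.refl ρ⟩, inv_mul_eq_one₀ (NeZero.ne _)] at h
  exact h.symm

open scoped Classical in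
theorem sum_char_mul_char_inv (V W : FDRep k G) [Simple V] [Simple W] :
    ∑ g, V.character g * W.character g⁻¹ =
      if V.character = W.character then (Nat.card G : k) else 0 := by
  have : Invertible (Nat.card G : k) := invertibleOfNonzero (NeZero.ne _)
  split_ifs with h
  · rw [← h]; exact (simple_iff_char_is_norm_one V).1 inferInstance
  · have := char_orthonormal V W
    rw [if_neg fun ⟨i⟩ => h (char_iso i)] at this
    exact (mul_eq_zero.1 this).resolve_left (inv_ne_zero (NeZero.ne _))

end Simple

variable {k : Type u} [Field k] {G : Type v} [Group G] [Fintype G]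

noncomputable def twistedIndicator (V : FDRep k G) (σ : G →* G) : k :=
  (Nat.card G : k)⁻¹ * ∑ g, V.character (σ g * g)

theorem twistedIndicator_eq_one_or_neg_one [IsAlgClosed k] [CharZero k] (V : FDRep k G)
    [Simple V] (σ : G →* G) (hσ : Function.Involutive σ)
    (hχ : ∀ g, V.character (σ g) = V.character g⁻¹) :
    V.twistedIndicator σ = 1 ∨ V.twistedIndicator σ = -1 := by
  have : Invertible (Fintype.card G : k) := invertibleOfNonzero (NeZero.ne _)
  have : Invertible (Nat.card G : k) := invertibleOfNonzero (NeZero.ne _)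
  let τ := Representation.tprod (V.ρ.comp σ) V.ρ
  let s : Module.End k (TensorProduct k V V) := (TensorProduct.comm k V V).toLinearMap
  have hs : s * s = 1 := TensorProduct.ext' fun _ _ => rfl
  have hswap : ∀ g, s * τ g = τ (σ g) * s := fun g =>
    TensorProduct.ext' fun _ _ => by simp [τ, s, hσ g]
  have hQs : Commute τ.averageMap s := by
    rw [Commute, SemiconjBy, τ.averageMap_eq_smul_sum, smul_mul_assoc, mul_smul_comm,
      Finset.mul_sum, Finset.sum_mul]
    exact congrArg _ (Fintype.sum_equiv hσ.toPerm _ _ hswap).symm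
  have htrQ : trace k _ τ.averageMap = 1 := by
    rw [(Representation.isProj_averageMap τ).trace,
      ← Representation.card_inv_mul_sum_char_eq_finrank]
    have hχτ : ∀ g, τ.character g = V.character g * V.character g⁻¹ := fun g => by
      rw [mul_comm, ← hχ]
      exact trace_tensorProduct' _ _
    simpa [hχτ, Nonempty.intro (Iso.refl V)] using char_orthonormal V V
  have htrQs : trace k _ (τ.averageMap * s) = V.twistedIndicator σ := by
    rw [τ.averageMap_eq_smul_sum, smul_mul_assoc, Finset.sum_mul, map_smul, map_sum]
    have hterm : ∀ g, trace k _ (τ g * s) = V.character (σ g * g) := fun g => by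
      rw [Module.End.mul_eq_comp, Representation.tprod_apply, trace_map_comp_comm,
        ← Module.End.mul_eq_comp, MonoidHom.comp_apply, ← map_mul]
      rfl
    simp only [hterm, twistedIndicator, invOf_eq_inv, Nat.card_eq_fintype_card, smul_eq_mul]
  exact htrQs ▸ trace_mul_eq_one_or_neg_one
    (Representation.isProj_averageMap τ).isIdempotentElem htrQ hs hQs

end FDRep

/-- The element `∑ f g • g⁻¹` of the group algebra kills every simple submodule of the
(semisimple) regular module, hence is zero. -/
theorem IsClassFunction.eq_zero_of_forall_simple {k : Type u} [Field k] [IsAlgClosed k]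
    [CharZero k] {G : Type u} [Group G] [Fintype G] {f : G → k} (hf : IsClassFunction f)
    (horth : ∀ V : FDRep k G, Simple V → ∑ g, f g * V.character g⁻¹ = 0) : f = 0 := by
  classical
  let z : k[G] := ∑ g, f g • MonoidAlgebra.of k G g⁻¹
  have hkill : ∀ N : Submodule k[G] k[G], IsSimpleModule k[G] N → ∀ n ∈ N, z • n = 0 := by
    intro N _ n hn
    let ρ := Representation.ofModule' (k := k) (G := G) N
    have := Representation.isIrreducible_ofModule' (k := k) (G := G) N
    have hvan := ρ.sum_smul_inv_eq_zero_of_isIrreducible hf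
      (horth (FDRep.of ρ) (FDRep.simple_of_isIrreducible ρ))
    have hz : ρ.asAlgebraHom z = 0 := by
      simpa [z, map_sum, Representation.asAlgebraHom_of] using hvan
    rw [Representation.asAlgebraHom_ofModule'] at hz
    simpa using congrArg Subtype.val (DFunLike.congr_fun hz ⟨n, hn⟩)
  have hz : z = 0 := by
    simpa using IsSemisimpleModule.smul_eq_zero_of_forall_isSimpleModule hkill 1
  funext g
  simpa [z, MonoidAlgebra.coeff_sum, Finsupp.finsetSum_apply, MonoidAlgebra.coeff_single,
    Finsupp.single_apply] using congrArg (fun x : k[G] => x.coeff g⁻¹) hz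

theorem IsClassFunction.eq_sum_mul_char {k : Type u} [Field k] [IsAlgClosed k] [CharZero k]
    {G : Type u} [Group G] [Fintype G] {ι : Type*} [Fintype ι] (χ : ι → G → k)
    (hirr : ∀ i, ∃ V : FDRep k G, Simple V ∧ χ i = V.character)
    (hall : ∀ V : FDRep k G, Simple V → ∃ i, χ i = V.character) (hdist : Function.Injective χ)
    {f : G → k} (hf : IsClassFunction f) (g : G) :
    f g = ∑ i, ((Nat.card G : k)⁻¹ * ∑ x, f x * χ i x⁻¹) * χ i g := by
  classical
  choose V hV hχV using hirr
  set c := fun i => (Nat.card G : k)⁻¹ * ∑ x, f x * χ i x⁻¹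
  have horth : ∀ i j, ∑ x, χ i x * χ j x⁻¹ = if i = j then (Nat.card G : k) else 0 := by
    intro i j
    have := hV i; have := hV j
    rw [hχV, hχV, FDRep.sum_char_mul_char_inv, ← hχV, ← hχV]
    simp only [hdist.eq_iff]
  suffices hzero : (fun g => f g - ∑ i, c i * χ i g) = 0 from sub_eq_zero.1 (congrFun hzero g)
  refine IsClassFunction.eq_zero_of_forall_simple (fun g x => ?_) fun W hW => ?_
  · simp only [hf g x, hχV, FDRep.char_conj]
  obtain ⟨j, hj⟩ := hall W hW
  have hcoeff : ∑ x, (∑ i, c i * χ i x) * χ j x⁻¹ = ∑ x, f x * χ j x⁻¹ := by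
    calc ∑ x, (∑ i, c i * χ i x) * χ j x⁻¹ = ∑ i, c i * ∑ x, χ i x * χ j x⁻¹ := by
          simp only [Finset.sum_mul, Finset.mul_sum, mul_assoc]; exact Finset.sum_comm
      _ = ∑ x, f x * χ j x⁻¹ := by
          simp only [horth, mul_ite, mul_zero, Finset.sum_ite_eq', Finset.mem_univ, if_true, c]
          rw [mul_comm, ← mul_assoc, mul_inv_cancel₀ (NeZero.ne _), one_mul]
  rw [← hj]
  simp only [sub_mul, Finset.sum_sub_distrib, hcoeff, sub_self]

section AntiAutomorphism

variable {G : Type*} [Group G] {L : G → G}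

def MonoidHom.invOfAnti (hanti : ∀ g h, L (g * h) = L h * L g) : G →* G :=
  MonoidHom.mk' (fun g => (L g)⁻¹) fun g h => by rw [hanti, mul_inv_rev]

theorem map_inv_of_anti (hanti : ∀ g h, L (g * h) = L h * L g) (g : G) : L g⁻¹ = (L g)⁻¹ :=
  inv_injective ((MonoidHom.invOfAnti hanti).map_inv g :)

theorem MonoidHom.invOfAnti_involutive (hanti : ∀ g h, L (g * h) = L h * L g)
    (hinv : ∀ g, L (L g) = g) : Function.Involutive (MonoidHom.invOfAnti hanti) := fun g => by
  simp [MonoidHom.invOfAnti, ← map_inv_of_anti hanti, hinv]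

theorem isClassFunction_card_fiber [Fintype G] [DecidableEq G]
    (hanti : ∀ g h, L (g * h) = L h * L g) (hinv : ∀ g, L (L g) = g) :
    IsClassFunction fun g => Fintype.card {h // h⁻¹ * L h = g} := fun g x =>
  Fintype.card_congr <| Equiv.subtypeEquiv ((Equiv.mulLeft (L x)).trans (Equiv.mulRight x))
    fun h => by
      have key : (L x * h * x)⁻¹ * L (L x * h * x) = x⁻¹ * (h⁻¹ * L h) * x := by
        rw [hanti, hanti, hinv]; group
      simp only [Equiv.trans_apply, Equiv.coe_mulLeft, Equiv.coe_mulRight, key]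
      constructor
      · intro e; rw [e]; group
      · intro e; rw [← e]; group

end AntiAutomorphism

/-- let `G` be a finite group with irreducible complex characters
`χ 1, …, χ r`, and `L` an involutive anti-automorphism of `G` such that
`χ k (L g) = χ k g` for all `k` and `g`.  Then the class function
`g ↦ |{h : h⁻¹ L(h) = g}|` equals `Σ_k ε_k χ_k` with each `ε_k = ±1`. -/
theorem gelfand_stmt5 {G : Type} [Group G] [Fintype G] [DecidableEq G]
    {r : ℕ} (χ : Fin r → G → ℂ)
    (hirr : ∀ k, ∃ V : FDRep ℂ G, Simple V ∧ χ k = V.character)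
    (hall : ∀ V : FDRep ℂ G, Simple V → ∃ k, χ k = V.character)
    (hdist : Function.Injective χ)
    (L : G → G)
    (hanti : ∀ g h : G, L (g * h) = L h * L g) (hinv : ∀ g : G, L (L g) = g)
    (hLchar : ∀ (k : Fin r) (g : G), χ k (L g) = χ k g) :
    ∃ ε : Fin r → ℂ, (∀ k, ε k = 1 ∨ ε k = -1) ∧
      ∀ g : G, (Fintype.card {h : G // h⁻¹ * L h = g} : ℂ) = ∑ k, ε k * χ k g := by
  choose V hV hχV using hirr
  set σ := MonoidHom.invOfAnti hanti
  have hσχ : ∀ k g, (V k).character (σ g) = (V k).character g⁻¹ := fun k g => by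
    rw [← hχV, show σ g = L g⁻¹ from (map_inv_of_anti hanti g).symm, hLchar]
  refine ⟨fun k => (V k).twistedIndicator σ, fun k => ?_, fun g => ?_⟩
  · have := hV k
    exact (V k).twistedIndicator_eq_one_or_neg_one σ
      (MonoidHom.invOfAnti_involutive hanti hinv) (hσχ k)
  rw [IsClassFunction.eq_sum_mul_char χ (fun k => ⟨V k, hV k, hχV k⟩) hall hdist
    (f := fun g => (Fintype.card {h // h⁻¹ * L h = g} : ℂ))
    (fun g x => congrArg Nat.cast (isClassFunction_card_fiber hanti hinv g x)) g]
  refine Finset.sum_congr rfl fun k _ => congrArg (· * χ k g) ?_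
  rw [Fintype.sum_card_fiber_mul (fun h => h⁻¹ * L h) fun g => χ k g⁻¹]
  simp only [FDRep.twistedIndicator, hχV, mul_inv_rev, inv_inv]
  rfl
end
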